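/- If a truth assignment σ satisfies the 3-SAT instance φ, then there exists a hyperpath from p_0 to f in C(φ) containing the edge ({p_n}, {q_0}); explicitly, the subhypergraph consisting of, for each variable v_i, the edge corresponding to σ(v_i), the edges ({p_n}, {q_0}) and ({q_0}, {q_{1,1}, q_{1,2}, q_{1,3}}), and for each clause c_i an edge ({q_{i,j_i}}, ·) where j_i is a literal of c_i satisfied by σ, together with appropriate vertex restriction and minimization, is such a hyperpath. -/

import Mathlib

/-- A directed hypergraph: finite vertex set, finite set of hyperedges,
each hyperedge `e = (T_e, H_e)` with tail `T_e ⊆ V`, head `H_e ⊆ V \ T_e`. -/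
structure DiHypergraph (V : Type*) [DecidableEq V] where
  verts : Finset V
  edges : Finset (Finset V × Finset V)
  tail_sub : ∀ e ∈ edges, e.1 ⊆ verts
  head_sub : ∀ e ∈ edges, e.2 ⊆ verts
  disj : ∀ e ∈ edges, Disjoint e.1 e.2

variable {V : Type*} [DecidableEq V]

/-- Subhypergraph relation. -/
def Subhg (H' H : DiHypergraph V) : Prop :=
  H'.verts ⊆ H.verts ∧ H'.edges ⊆ H.edges

/-- Union of the heads of a list of hyperedges. -/
def headsUnion (L : List (Finset V × Finset V)) : Finset V :=
  L.foldr (fun e acc => e.2 ∪ acc) ∅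

/-- The hyperedges of `H'` can be ordered `⟨e_1, …, e_k⟩` so that
`T(e_i) ⊆ {s} ∪ H(e_1) ∪ ⋯ ∪ H(e_{i-1})` and `d ∈ H(e_k)`. -/
def HasOrdering (H' : DiHypergraph V) (s d : V) : Prop :=
  ∃ L : List (Finset V × Finset V), L.Nodup ∧ L.toFinset = H'.edges ∧
    (∀ i : Fin L.length, (L.get i).1 ⊆ insert s (headsUnion (L.take (i : ℕ)))) ∧
    ∃ e, L.getLast? = some e ∧ d ∈ e.2

/-- A hyperpath from `s` to `d` in `H` is a subhypergraph of `H`, minimal with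
respect to deletion of vertices and edges, admitting a valid edge ordering. -/
def IsHyperpath (H : DiHypergraph V) (s d : V) (H' : DiHypergraph V) : Prop :=
  Subhg H' H ∧ HasOrdering H' s d ∧
    ∀ H'' : DiHypergraph V, Subhg H'' H' → HasOrdering H'' s d → H'' = H'

/-- `PathFrom H s d vs es` : `vs` and `es` form a (simple graph-style) path
`(v₁ = s, e₁, v₂, …, e_q, v_{q+1} = d)` with `vᵢ ∈ T(eᵢ)`, `v_{i+1} ∈ H(eᵢ)`,
all edges taken from `H`. -/
inductive PathFrom (H : DiHypergraph V) : V → V → List V → List (Finset V × Finset V) → Prop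
  | single {s d : V} {e : Finset V × Finset V} :
      e ∈ H.edges → s ∈ e.1 → d ∈ e.2 → PathFrom H s d [s, d] [e]
  | cons {s v d : V} {vs : List V} {es : List (Finset V × Finset V)}
      {e : Finset V × Finset V} :
      e ∈ H.edges → s ∈ e.1 → v ∈ e.2 → PathFrom H v d vs es →
      PathFrom H s d (s :: vs) (e :: es)

/-! ### The 3-SAT construction `C(φ)`

A 3-SAT instance with `n` variables and `m` clauses is `φ : Fin m → Fin 3 → Fin n × Bool`:
literal `j` of clause `i` is `(v, sign)`, positive if `sign = true`. -/

/-- An assignment `σ` satisfies the 3-SAT instance `φ`. -/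
def SatAssign {n m : ℕ} (φ : Fin m → Fin 3 → Fin n × Bool) (σ : Fin n → Bool) : Prop :=
  ∀ i : Fin m, ∃ j : Fin 3, σ (φ i j).1 = (φ i j).2

/-- Vertices of the construction `C(φ)`. -/
inductive Vtx (n m : ℕ) where
  | p (i : Fin (n + 1))
  | q0
  | q (i : Fin m) (j : Fin 3)
  | f
deriving DecidableEq, Fintype

/-- The edge assigning variable `v_i` the value `b`: tail `{p_{i-1}}`, head
`{p_i}` together with the `q`-vertices of the clause literals blocked by the
assignment (the occurrences of `v_i` with sign `!b`). -/
def varEdge {n m : ℕ} (φ : Fin m → Fin 3 → Fin n × Bool) (i : Fin n) (b : Bool) :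
    Finset (Vtx n m) × Finset (Vtx n m) :=
  ({Vtx.p i.castSucc},
    insert (Vtx.p i.succ)
      (((Finset.univ : Finset (Fin m × Fin 3)).filter
          (fun xy => φ xy.1 xy.2 = (i, !b))).image fun xy => Vtx.q xy.1 xy.2))

/-- The head of the clause edges for clause `i`: the three `q`-vertices of
clause `i+1`, or `{f}` for the last clause. -/
def nextQ {n m : ℕ} (i : Fin m) : Finset (Vtx n m) :=
  if h : (i : ℕ) + 1 < m then
    {Vtx.q ⟨(i : ℕ) + 1, h⟩ 0, Vtx.q ⟨(i : ℕ) + 1, h⟩ 1, Vtx.q ⟨(i : ℕ) + 1, h⟩ 2}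
  else {Vtx.f}

/-- The edge choosing literal `j` to satisfy clause `i`. -/
def clauseEdge {n m : ℕ} (i : Fin m) (j : Fin 3) :
    Finset (Vtx n m) × Finset (Vtx n m) :=
  ({Vtx.q i j}, nextQ i)

/-- The forced edge `({p_n}, {q_0})`. -/
def forcedEdge (n m : ℕ) : Finset (Vtx n m) × Finset (Vtx n m) :=
  ({Vtx.p (Fin.last n)}, {Vtx.q0})

/-- The connector edge `({q_0}, {q_{1,1}, q_{1,2}, q_{1,3}})`. -/
def q0Edge (n m : ℕ) : Finset (Vtx n m) × Finset (Vtx n m) :=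
  ({Vtx.q0},
    if h : 0 < m then {Vtx.q ⟨0, h⟩ 0, Vtx.q ⟨0, h⟩ 1, Vtx.q ⟨0, h⟩ 2}
    else {Vtx.f})

/-- The construction `C(φ)`. -/
def Cphi {n m : ℕ} (φ : Fin m → Fin 3 → Fin n × Bool) : DiHypergraph (Vtx n m) where
  verts := Finset.univ
  edges :=
    ((Finset.univ : Finset (Fin n × Bool)).image fun ib => varEdge φ ib.1 ib.2) ∪
    ((Finset.univ : Finset (Fin m × Fin 3)).image fun ij => clauseEdge ij.1 ij.2) ∪
    {forcedEdge n m, q0Edge n m}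
  tail_sub := fun _ _ => Finset.subset_univ _
  head_sub := fun _ _ => Finset.subset_univ _
  disj := by
    intro e he
    simp only [Finset.mem_union, Finset.mem_image, Finset.mem_univ, true_and,
      Finset.mem_insert, Finset.mem_singleton, Prod.exists] at he
    rcases he with (⟨i, b, rfl⟩ | ⟨i, j, rfl⟩) | (rfl | rfl)
    · simp only [varEdge, Finset.disjoint_singleton_left, Finset.mem_insert,
        Finset.mem_image, Finset.mem_filter, Finset.mem_univ, true_and, Prod.exists]
      rintro (h | ⟨x, y, _, h⟩)
      · exact absurd (Vtx.p.injEq .. ▸ congrArg id h)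
          (by simpa using (Fin.castSucc_lt_succ : i.castSucc < i.succ).ne)
      · cases h
    · simp only [clauseEdge, nextQ, Finset.disjoint_singleton_left]
      split
      · simp only [Finset.mem_insert, Finset.mem_singleton]
        rintro (h | h | h) <;>
          { injection h with h1 h2
            exact absurd (congrArg Fin.val h1) (by simp) }
      · simp
    · simp [forcedEdge]
    · simp only [q0Edge, Finset.disjoint_singleton_left]
      split <;> simp

lemma mem_headsUnion {v : V} {L : List (Finset V × Finset V)} :
    v ∈ headsUnion L ↔ ∃ e ∈ L, v ∈ e.2 := by
  induction L with
  | nil => simp [headsUnion]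
  | cons a l ih => simp [headsUnion, List.foldr] at ih ⊢; rw [ih]

lemma DiHypergraph.ext' {H1 H2 : DiHypergraph V} (hv : H1.verts = H2.verts)
    (he : H1.edges = H2.edges) : H1 = H2 := by
  cases H1; cases H2; simp_all

lemma chain_isHyperpath (H : DiHypergraph V) (ce : ℕ → Finset V × Finset V)
    (xv : ℕ → V) (K : ℕ) (s d : V)
    (hK : 0 < K)
    (hce : ∀ t < K, ce t ∈ H.edges)
    (htail : ∀ t < K, (ce t).1 = {xv t})
    (hx0 : xv 0 = s)
    (hxs : ∀ t, 0 < t → t < K → xv t ≠ s)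
    (hstep : ∀ t, t + 1 < K → xv (t + 1) ∈ (ce t).2)
    (huniq : ∀ t r, 0 < t → t < K → r < K → xv t ∈ (ce r).2 → r + 1 = t)
    (hd : ∀ r < K, (d ∈ (ce r).2 ↔ r + 1 = K))
    (hxinj : ∀ t r, t < K → r < K → xv t = xv r → t = r)
    (hcover : ∀ v ∈ H.verts, ∃ t < K, v ∈ (ce t).1 ∪ (ce t).2) :
    ∃ H' : DiHypergraph V, IsHyperpath H s d H' ∧
      H'.edges = (List.ofFn fun i : Fin K => ce i).toFinset ∧ H'.verts = H.verts := by
  classical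
  set L : List (Finset V × Finset V) := List.ofFn fun i : Fin K => ce i with hL
  have hlen : L.length = K := by simp [hL]
  have hget : ∀ i : Fin L.length, L.get i = ce i := by
    intro i; simp [hL, List.get_ofFn]
  have hgetE : ∀ (k : ℕ) (h : k < L.length), L[k] = ce k := by
    intro k h; simpa using hget ⟨k, h⟩
  have hmemL : ∀ e, e ∈ L ↔ ∃ t < K, ce t = e := by
    intro e; simp [hL, List.mem_ofFn]
    constructor
    · rintro ⟨t, rfl⟩; exact ⟨t, t.isLt, rfl⟩
    · rintro ⟨t, ht, rfl⟩; exact ⟨⟨t, ht⟩, rfl⟩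
  have hE : ∀ t < K, ce t ∈ H.edges := hce
  refine ⟨⟨H.verts, L.toFinset, ?_, ?_, ?_⟩, ⟨⟨le_refl _, ?_⟩, ?_, ?_⟩, rfl, rfl⟩
  · intro e he
    rw [List.mem_toFinset, hmemL] at he
    obtain ⟨t, ht, rfl⟩ := he
    exact H.tail_sub _ (hE t ht)
  · intro e he
    rw [List.mem_toFinset, hmemL] at he
    obtain ⟨t, ht, rfl⟩ := he
    exact H.head_sub _ (hE t ht)
  · intro e he
    rw [List.mem_toFinset, hmemL] at he
    obtain ⟨t, ht, rfl⟩ := he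
    exact H.disj _ (hE t ht)
  · -- edges subset
    intro e he
    rw [List.mem_toFinset, hmemL] at he
    obtain ⟨t, ht, rfl⟩ := he
    exact hE t ht
  · -- HasOrdering
    refine ⟨L, ?_, rfl, ?_, ?_⟩
    · rw [hL, List.nodup_ofFn]
      intro a b hab
      simp only at hab
      have := hxinj a b a.isLt b.isLt ?_
      · exact Fin.ext this
      · have h1 := htail a a.isLt
        have h2 := htail b b.isLt
        rw [hab, h2] at h1
        exact (Finset.singleton_injective h1.symm)
    · intro i
      rw [hget, htail i (hlen ▸ i.isLt), Finset.singleton_subset_iff]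
      rcases Nat.eq_zero_or_pos (i : ℕ) with h0 | hpos
      · rw [h0, hx0]; exact Finset.mem_insert_self _ _
      · apply Finset.mem_insert_of_mem
        rw [mem_headsUnion]
        have hi : (i : ℕ) - 1 + 1 = (i : ℕ) := Nat.succ_pred_eq_of_pos hpos
        refine ⟨ce ((i : ℕ) - 1), ?_, ?_⟩
        · have hr : (i : ℕ) - 1 < (L.take (i : ℕ)).length := by
            simp only [List.length_take, hlen]
            have := i.isLt
            omega
          have h2 : (L.take (i : ℕ))[(i : ℕ) - 1] = ce ((i : ℕ) - 1) := by
            rw [List.getElem_take]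
            exact hgetE _ (by have := i.isLt; omega)
          rw [← h2]
          exact List.getElem_mem hr
        · rw [← hi] at hpos ⊢
          exact hstep _ (by have := i.isLt; omega)
    · have hne : L ≠ [] := by
        intro h; rw [h] at hlen; simp at hlen; omega
      refine ⟨L.getLast hne, List.getLast?_eq_getLast hne, ?_⟩
      have : L.getLast hne = L[K - 1]'(by omega) := by
        rw [List.getLast_eq_getElem]; congr 1; omega
      rw [this, hgetE]
      exact (hd (K - 1) (by omega)).2 (by omega)
  · -- minimality
    rintro H'' ⟨hv, he⟩ ⟨L', hnd, htf, hord, e, hlast, hde⟩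
    have hmem'' : ∀ e' ∈ H''.edges, ∃ t < K, ce t = e' := by
      intro e' he'
      have := he he'
      rw [List.mem_toFinset, hmemL] at this
      exact this
    have hallE : ∀ t < K, ce t ∈ H''.edges := by
      have hbase : ce (K - 1) ∈ H''.edges := by
        have hne' : L' ≠ [] := by
          intro h; rw [h] at hlast; simp at hlast
        have hmem : e ∈ L' := by
          rw [List.getLast?_eq_getLast hne'] at hlast
          rw [Option.some_inj] at hlast
          rw [← hlast]; exact List.getLast_mem hne'
        have heE : e ∈ H''.edges := by rw [← htf]; exact List.mem_toFinset.2 hmem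
        obtain ⟨r, hr, hre⟩ := hmem'' e heE
        have : r + 1 = K := (hd r hr).1 (hre ▸ hde)
        have : r = K - 1 := by omega
        rwa [← this, hre]
      have hstep' : ∀ t, t + 1 < K → ce (t + 1) ∈ H''.edges → ce t ∈ H''.edges := by
        intro t ht1 hmem
        rw [← htf, List.mem_toFinset] at hmem
        obtain ⟨i, hi⟩ := List.mem_iff_get.1 hmem
        have := hord i
        rw [hi, htail (t + 1) ht1, Finset.singleton_subset_iff] at this
        rcases Finset.mem_insert.1 this with h | h
        · exact absurd h (hxs (t + 1) (Nat.succ_pos t) ht1)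
        · rw [mem_headsUnion] at h
          obtain ⟨e', he'take, he'h⟩ := h
          have he'L : e' ∈ L' := List.take_subset _ _ he'take
          have he'E : e' ∈ H''.edges := by rw [← htf]; exact List.mem_toFinset.2 he'L
          obtain ⟨r, hr, hre⟩ := hmem'' e' he'E
          have : r + 1 = t + 1 := huniq (t + 1) r (Nat.succ_pos t) ht1 hr (hre ▸ he'h)
          have : r = t := by omega
          rwa [← this, hre]
      have key : ∀ u, u ≤ K - 1 → ce (K - 1 - u) ∈ H''.edges := by
        intro u
        induction u with
        | zero => intro _; simpa using hbase
        | succ v ih =>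
          intro huv
          have h1 : K - 1 - (v + 1) + 1 = K - 1 - v := by omega
          apply hstep'
          · omega
          · rw [h1]; exact ih (by omega)
      intro t ht
      have : t = K - 1 - (K - 1 - t) := by omega
      rw [this]; exact key _ (by omega)
    have hedges : H''.edges = L.toFinset := by
      apply Finset.Subset.antisymm he
      intro e' he'
      rw [List.mem_toFinset, hmemL] at he'
      obtain ⟨t, ht, rfl⟩ := he'
      exact hallE t ht
    have hverts : H''.verts = H.verts := by
      apply Finset.Subset.antisymm hv
      intro v hvmem
      obtain ⟨t, ht, hin⟩ := hcover v hvmem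
      rcases Finset.mem_union.1 hin with h | h
      · exact H''.tail_sub _ (hallE t ht) h
      · exact H''.head_sub _ (hallE t ht) h
    exact DiHypergraph.ext' hverts hedges

section Inst
variable {n m : ℕ} (φ : Fin m → Fin 3 → Fin n × Bool) (σ : Fin n → Bool) (j : Fin m → Fin 3)

/-- The chain of edges. -/
def ceF (t : ℕ) : Finset (Vtx n m) × Finset (Vtx n m) :=
  if h : t < n then varEdge φ ⟨t, h⟩ (σ ⟨t, h⟩)
  else if t = n then forcedEdge n m
  else if t = n + 1 then q0Edge n m
  else if h : t - (n + 2) < m then clauseEdge ⟨t - (n + 2), h⟩ (j ⟨t - (n + 2), h⟩)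
  else forcedEdge n m

/-- The chain of vertices. -/
def xvF (t : ℕ) : Vtx n m :=
  if h : t < n + 1 then Vtx.p ⟨t, h⟩
  else if t = n + 1 then Vtx.q0
  else if h : t - (n + 2) < m then Vtx.q ⟨t - (n + 2), h⟩ (j ⟨t - (n + 2), h⟩)
  else Vtx.f

lemma ceF_var {t : ℕ} (h : t < n) : ceF φ σ j t = varEdge φ ⟨t, h⟩ (σ ⟨t, h⟩) := dif_pos h

lemma ceF_forced : ceF (n := n) φ σ j n = forcedEdge n m := by
  simp [ceF]

lemma ceF_q0 : ceF (n := n) φ σ j (n + 1) = q0Edge n m := by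
  simp [ceF]

lemma ceF_clause {t : ℕ} (h1 : n + 2 ≤ t) (h2 : t - (n + 2) < m) :
    ceF φ σ j t = clauseEdge ⟨t - (n + 2), h2⟩ (j ⟨t - (n + 2), h2⟩) := by
  rw [ceF, dif_neg (by omega), if_neg (by omega), if_neg (by omega), dif_pos h2]

lemma xvF_p {t : ℕ} (h : t < n + 1) : xvF j t = Vtx.p ⟨t, h⟩ := dif_pos h

lemma xvF_q0 : xvF (n := n) j (n + 1) = Vtx.q0 := by
  simp [xvF]

lemma xvF_q {t : ℕ} (h1 : n + 2 ≤ t) (h2 : t - (n + 2) < m) :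
    xvF (n := n) j t = Vtx.q ⟨t - (n + 2), h2⟩ (j ⟨t - (n + 2), h2⟩) := by
  rw [xvF, dif_neg (by omega), if_neg (by omega), dif_pos h2]


lemma mem_three {i0 : Fin m} (y : Fin 3) :
    Vtx.q (n := n) i0 y ∈ ({Vtx.q i0 0, Vtx.q i0 1, Vtx.q i0 2} : Finset (Vtx n m)) := by
  fin_cases y <;> simp

lemma xvF_ne_f {t : ℕ} (ht : t < n + 2 + m) : xvF (n := n) j t ≠ Vtx.f := by
  rcases Nat.lt_or_ge t (n + 1) with h | h
  · rw [xvF_p j h]; simp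
  · rcases Nat.eq_or_lt_of_le h with h' | h'
    · rw [← h', xvF_q0]; simp
    · rw [xvF_q j (by omega) (by omega)]; simp

lemma inst_hce : ∀ t < n + 2 + m, ceF φ σ j t ∈ (Cphi φ).edges := by
  intro t ht
  simp only [Cphi, Finset.mem_union, Finset.mem_image, Finset.mem_univ, true_and,
    Finset.mem_insert, Finset.mem_singleton, Prod.exists]
  rcases Nat.lt_or_ge t n with h | h
  · exact Or.inl (Or.inl ⟨⟨t, h⟩, σ ⟨t, h⟩, (ceF_var φ σ j h).symm⟩)
  · rcases Nat.eq_or_lt_of_le h with h' | h'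
    · exact Or.inr (Or.inl (by rw [← h', ceF_forced]))
    · rcases Nat.eq_or_lt_of_le h' with h'' | h''
      · exact Or.inr (Or.inr (by rw [← h'', ceF_q0]))
      · exact Or.inl (Or.inr ⟨⟨t - (n + 2), by omega⟩, j ⟨t - (n + 2), by omega⟩,
          (ceF_clause φ σ j (by omega) (by omega)).symm⟩)

lemma inst_htail : ∀ t < n + 2 + m, (ceF φ σ j t).1 = {xvF (n := n) j t} := by
  intro t ht
  rcases Nat.lt_or_ge t n with h | h
  · rw [ceF_var φ σ j h, xvF_p j (by omega)]
    simp [varEdge]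
  · rcases Nat.eq_or_lt_of_le h with h' | h'
    · rw [← h', ceF_forced, xvF_p j (by omega)]
      simp [forcedEdge, Fin.last]
    · rcases Nat.eq_or_lt_of_le h' with h'' | h''
      · rw [← h'', ceF_q0, xvF_q0]
        simp [q0Edge]
      · rw [ceF_clause φ σ j (by omega) (by omega), xvF_q j (by omega) (by omega)]
        simp [clauseEdge]

lemma inst_hstep : ∀ t, t + 1 < n + 2 + m → xvF (n := n) j (t + 1) ∈ (ceF φ σ j t).2 := by
  intro t ht
  rcases Nat.lt_or_ge t n with h | h
  · rw [ceF_var φ σ j h, xvF_p j (by omega)]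
    simp only [varEdge, Finset.mem_insert]
    left
    congr 1
  · rcases Nat.eq_or_lt_of_le h with h' | h'
    · rw [← h', ceF_forced, xvF_q0]
      simp [forcedEdge]
    · rcases Nat.eq_or_lt_of_le h' with h'' | h''
      · subst h''
        rw [ceF_q0, xvF_q j (by omega) (by omega)]
        have hm : 0 < m := by omega
        simp only [q0Edge, dif_pos hm]
        have : (⟨n + 1 + 1 - (n + 2), by omega⟩ : Fin m) = ⟨0, hm⟩ := by
          apply Fin.ext; simp
        rw [this]
        exact mem_three _
      · rw [ceF_clause φ σ j (by omega) (by omega), xvF_q j (by omega) (by omega)]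
        simp only [clauseEdge, nextQ]
        have hc : (t - (n + 2) : ℕ) + 1 < m := by omega
        rw [dif_pos hc]
        have : (⟨t + 1 - (n + 2), by omega⟩ : Fin m) = ⟨t - (n + 2) + 1, hc⟩ := by
          apply Fin.ext; simp; omega
        rw [this]
        exact mem_three _

lemma inst_huniq (hj : ∀ i : Fin m, σ (φ i (j i)).1 = (φ i (j i)).2) :
    ∀ t r, 0 < t → t < n + 2 + m → r < n + 2 + m →
      xvF (n := n) j t ∈ (ceF φ σ j r).2 → r + 1 = t := by
  intro t r ht0 htK hrK hmem
  rcases Nat.lt_or_ge r n with hr | hr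
  · rw [ceF_var φ σ j hr] at hmem
    simp only [varEdge, Finset.mem_insert, Finset.mem_image, Finset.mem_filter,
      Finset.mem_univ, true_and, Prod.exists] at hmem
    rcases Nat.lt_or_ge t (n + 1) with htn | htn
    · rw [xvF_p j htn] at hmem
      rcases hmem with h | ⟨x, y, _, h⟩
      · simp only [Vtx.p.injEq, Fin.ext_iff, Fin.val_succ] at h
        omega
      · exact absurd h (by simp)
    · rcases Nat.eq_or_lt_of_le htn with htn' | htn'
      · rw [← htn', xvF_q0] at hmem
        rcases hmem with h | ⟨x, y, _, h⟩ <;> simp at h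
      · rw [xvF_q j (by omega) (by omega)] at hmem
        rcases hmem with h | ⟨x, y, hφ, h⟩
        · exact absurd h (by simp)
        · simp only [Vtx.q.injEq] at h
          obtain ⟨rfl, rfl⟩ := h
          have := hj ⟨t - (n + 2), by omega⟩
          rw [hφ] at this
          simp at this
  · rcases Nat.eq_or_lt_of_le hr with hr' | hr'
    · rw [← hr', ceF_forced] at hmem
      simp only [forcedEdge, Finset.mem_singleton] at hmem
      rcases Nat.lt_or_ge t (n + 1) with htn | htn
      · rw [xvF_p j htn] at hmem; exact absurd hmem (by simp)
      · rcases Nat.eq_or_lt_of_le htn with htn' | htn'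
        · omega
        · rw [xvF_q j (by omega) (by omega)] at hmem; exact absurd hmem (by simp)
    · rcases Nat.eq_or_lt_of_le hr' with hr'' | hr''
      · rw [← hr'', ceF_q0] at hmem
        simp only [q0Edge] at hmem
        by_cases hm : 0 < m
        · rw [dif_pos hm] at hmem
          rcases Nat.lt_or_ge t (n + 1) with htn | htn
          · rw [xvF_p j htn] at hmem; simp at hmem
          · rcases Nat.eq_or_lt_of_le htn with htn' | htn'
            · rw [← htn', xvF_q0] at hmem; simp at hmem
            · rw [xvF_q j (by omega) (by omega)] at hmem
              simp only [Finset.mem_insert, Finset.mem_singleton, Vtx.q.injEq,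
                Fin.ext_iff] at hmem
              omega
        · rw [dif_neg hm] at hmem
          simp only [Finset.mem_singleton] at hmem
          exact absurd hmem (xvF_ne_f j htK)
      · rw [ceF_clause φ σ j (by omega) (by omega)] at hmem
        simp only [clauseEdge, nextQ] at hmem
        by_cases hc : (r - (n + 2) : ℕ) + 1 < m
        · rw [dif_pos (by simpa using hc)] at hmem
          rcases Nat.lt_or_ge t (n + 1) with htn | htn
          · rw [xvF_p j htn] at hmem; simp at hmem
          · rcases Nat.eq_or_lt_of_le htn with htn' | htn'
            · rw [← htn', xvF_q0] at hmem; simp at hmem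
            · rw [xvF_q j (by omega) (by omega)] at hmem
              simp only [Finset.mem_insert, Finset.mem_singleton, Vtx.q.injEq,
                Fin.ext_iff] at hmem
              omega
        · rw [dif_neg (by simpa using hc)] at hmem
          simp only [Finset.mem_singleton] at hmem
          exact absurd hmem (xvF_ne_f j htK)

lemma inst_hd : ∀ r < n + 2 + m,
    (Vtx.f ∈ (ceF φ σ j r).2 ↔ r + 1 = n + 2 + m) := by
  intro r hrK
  rcases Nat.lt_or_ge r n with hr | hr
  · rw [ceF_var φ σ j hr]
    simp only [varEdge, Finset.mem_insert, Finset.mem_image, Finset.mem_filter,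
      Finset.mem_univ, true_and, Prod.exists]
    constructor
    · rintro (h | ⟨x, y, _, h⟩) <;> simp at h
    · intro h; omega
  · rcases Nat.eq_or_lt_of_le hr with hr' | hr'
    · rw [← hr', ceF_forced]
      simp only [forcedEdge, Finset.mem_singleton]
      constructor
      · intro h; simp at h
      · intro h; omega
    · rcases Nat.eq_or_lt_of_le hr' with hr'' | hr''
      · rw [← hr'', ceF_q0]
        simp only [q0Edge]
        by_cases hm : 0 < m
        · rw [dif_pos hm]
          constructor
          · intro h; simp at h
          · intro h; omega
        · rw [dif_neg hm]
          simp only [Finset.mem_singleton]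
          constructor
          · intro _; omega
          · intro _; simp
      · rw [ceF_clause φ σ j (by omega) (by omega)]
        simp only [clauseEdge, nextQ]
        by_cases hc : (r - (n + 2) : ℕ) + 1 < m
        · rw [dif_pos (by simpa using hc)]
          constructor
          · intro h; simp at h
          · intro h; omega
        · rw [dif_neg (by simpa using hc)]
          simp only [Finset.mem_singleton]
          constructor
          · intro _; omega
          · intro _; simp

lemma inst_hxinj : ∀ t r, t < n + 2 + m → r < n + 2 + m →
    xvF (n := n) j t = xvF (n := n) j r → t = r := by
  have hx : ∀ t, t < n + 2 + m →
      (∃ h : t < n + 1, xvF (n := n) j t = Vtx.p ⟨t, h⟩) ∨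
      (t = n + 1 ∧ xvF (n := n) j t = Vtx.q0) ∨
      (∃ h1 : n + 2 ≤ t, ∃ h2 : t - (n + 2) < m,
        xvF (n := n) j t = Vtx.q ⟨t - (n + 2), h2⟩ (j ⟨t - (n + 2), h2⟩)) := by
    intro t ht
    rcases Nat.lt_or_ge t (n + 1) with h | h
    · exact Or.inl ⟨h, xvF_p j h⟩
    · rcases Nat.eq_or_lt_of_le h with h' | h'
      · exact Or.inr (Or.inl ⟨h'.symm, by rw [← h']; exact xvF_q0 (n := n) j⟩)
      · exact Or.inr (Or.inr ⟨by omega, by omega, xvF_q j (by omega) (by omega)⟩)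
  intro t r htK hrK heq
  rcases hx t htK with ⟨h1, e1⟩ | ⟨h1, e1⟩ | ⟨h1, h1', e1⟩ <;>
    rcases hx r hrK with ⟨h2, e2⟩ | ⟨h2, e2⟩ | ⟨h2, h2', e2⟩ <;>
      rw [e1, e2] at heq <;>
        simp only [Vtx.p.injEq, Vtx.q.injEq, Fin.ext_iff, reduceCtorEq] at heq <;> omega

lemma inst_hcover : ∀ v : Vtx n m, ∃ t < n + 2 + m,
    v ∈ (ceF φ σ j t).1 ∪ (ceF φ σ j t).2 := by
  intro v
  match v with
  | Vtx.p i =>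
    rcases Nat.lt_or_ge (i : ℕ) n with h | h
    · refine ⟨(i : ℕ), by omega, ?_⟩
      rw [ceF_var φ σ j h]
      simp only [varEdge, Finset.mem_union, Finset.mem_singleton]
      left
      exact congrArg Vtx.p (Fin.ext rfl)
    · have : (i : ℕ) = n := by omega
      refine ⟨n, by omega, ?_⟩
      rw [ceF_forced]
      simp only [forcedEdge, Finset.mem_union, Finset.mem_singleton]
      left
      exact congrArg Vtx.p (Fin.ext (by rw [Fin.val_last]; exact this))
  | Vtx.q0 =>
    refine ⟨n + 1, by omega, ?_⟩
    rw [ceF_q0]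
    simp [q0Edge]
  | Vtx.q i y =>
    have hm : 0 < m := i.pos
    rcases Nat.eq_zero_or_pos (i : ℕ) with h | h
    · refine ⟨n + 1, by omega, ?_⟩
      rw [ceF_q0]
      simp only [q0Edge, dif_pos hm, Finset.mem_union]
      right
      have : i = ⟨0, hm⟩ := Fin.ext h
      rw [this]
      exact mem_three _
    · refine ⟨n + 2 + ((i : ℕ) - 1), by omega, ?_⟩
      rw [ceF_clause φ σ j (by omega) (by omega)]
      simp only [clauseEdge, nextQ, Finset.mem_union]
      right
      have hc : (n + 2 + ((i : ℕ) - 1) - (n + 2) : ℕ) + 1 < m := by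
        simp only [Nat.add_sub_cancel_left]
        omega
      rw [dif_pos (by simpa using hc)]
      have hieq : Vtx.q (n := n) i y =
          Vtx.q ⟨(↑(⟨n + 2 + ((i : ℕ) - 1) - (n + 2), by omega⟩ : Fin m) : ℕ) + 1, by simpa using hc⟩ y := by
        congr 1
        apply Fin.ext
        simp
        omega
      rw [hieq]
      exact mem_three _
  | Vtx.f =>
    by_cases hm : 0 < m
    · refine ⟨n + 2 + (m - 1), by omega, ?_⟩
      rw [ceF_clause φ σ j (by omega) (by omega)]
      simp only [clauseEdge, nextQ, Finset.mem_union]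
      right
      rw [dif_neg (by simp; omega)]
      simp
    · refine ⟨n + 1, by omega, ?_⟩
      rw [ceF_q0]
      simp only [q0Edge, Finset.mem_union]
      right
      rw [dif_neg hm]
      simp

lemma inst_hxs : ∀ t, 0 < t → t < n + 2 + m → xvF (n := n) j t ≠ Vtx.p 0 := by
  intro t ht0 htK h
  rcases Nat.lt_or_ge t (n + 1) with h1 | h1
  · rw [xvF_p j h1] at h
    simp only [Vtx.p.injEq, Fin.ext_iff, Fin.val_zero] at h
    omega
  · rcases Nat.eq_or_lt_of_le h1 with h2 | h2
    · rw [← h2, xvF_q0] at h; simp at h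
    · rw [xvF_q j (by omega) (by omega)] at h; simp at h

end Inst

/-- If `σ` satisfies `φ`, then there is a hyperpath from `p_0` to `f` in
`C(φ)` containing the forced edge `({p_n}, {q_0})`, obtained (after
minimization) from the edges `varEdge φ i (σ i)`, the connector edges, and for
each clause `c_i` the edge `clauseEdge i jᵢ` for a literal `jᵢ` of `c_i`
satisfied by `σ`. -/
theorem cphi_sat_gives_hyperpath {n m : ℕ} (φ : Fin m → Fin 3 → Fin n × Bool)
    (σ : Fin n → Bool) (hσ : SatAssign φ σ) :
    ∃ j : Fin m → Fin 3, (∀ i : Fin m, σ (φ i (j i)).1 = (φ i (j i)).2) ∧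
    ∃ H' : DiHypergraph (Vtx n m),
      IsHyperpath (Cphi φ) (Vtx.p 0) Vtx.f H' ∧
      forcedEdge n m ∈ H'.edges ∧
      H'.edges ⊆
        ((Finset.univ : Finset (Fin n)).image fun i => varEdge φ i (σ i)) ∪
        ((Finset.univ : Finset (Fin m)).image fun i => clauseEdge i (j i)) ∪
        {forcedEdge n m, q0Edge n m} := by
  classical
  choose j hj using hσ
  refine ⟨j, hj, ?_⟩
  obtain ⟨H', hpath, hedges, hverts⟩ :=
    chain_isHyperpath (Cphi φ) (ceF φ σ j) (xvF j) (n + 2 + m) (Vtx.p 0) Vtx.f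
      (by omega)
      (inst_hce φ σ j)
      (inst_htail φ σ j)
      (by rw [xvF_p j (by omega)]; exact congrArg Vtx.p (Fin.ext (by simp)))
      (inst_hxs j)
      (inst_hstep φ σ j)
      (inst_huniq φ σ j hj)
      (inst_hd φ σ j)
      (inst_hxinj j)
      (fun v _ => inst_hcover φ σ j v)
  refine ⟨H', hpath, ?_, ?_⟩
  · rw [hedges, List.mem_toFinset, List.mem_ofFn]
    exact ⟨⟨n, by omega⟩, ceF_forced φ σ j⟩
  · rw [hedges]
    intro e he
    rw [List.mem_toFinset, List.mem_ofFn] at he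
    obtain ⟨t, rfl⟩ := he
    simp only [Finset.mem_union, Finset.mem_image, Finset.mem_univ, true_and,
      Finset.mem_insert, Finset.mem_singleton]
    rcases Nat.lt_or_ge (t : ℕ) n with h | h
    · exact Or.inl (Or.inl ⟨⟨t, h⟩, (ceF_var φ σ j h).symm⟩)
    · rcases Nat.eq_or_lt_of_le h with h' | h'
      · exact Or.inr (Or.inl (by rw [← h', ceF_forced]))
      · rcases Nat.eq_or_lt_of_le h' with h'' | h''
        · exact Or.inr (Or.inr (by rw [← h'', ceF_q0]))
        · exact Or.inl (Or.inr ⟨⟨(t : ℕ) - (n + 2), by have := t.isLt; omega⟩,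
            (ceF_clause φ σ j (by omega) (by have := t.isLt; omega)).symm⟩)
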